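/- If f is p-radical convex and g is q-radical convex (p, q ≥ 1), then f + g is min{p,q}-radical convex. -/

import Mathlib

/-! A convex function `h x = f (x ^ (1 / p))` on `[0, ∞)` with its minimum at `0` is monotone, so
for `0 < r ≤ p` the function `f (x ^ (1 / r)) = h (x ^ (p / r))` is a monotone convex function of
a convex one. Thus `f` and `g` are both `min p q`-radical convex, and convexity survives sums. -/

open Set

/-- Unlike the paper's notion, this leaves out the conditions `f ≥ 0` and `f 0 = 0`. -/
def IsRadicalConvex (p : ℝ) (f : ℝ → ℝ) : Prop :=
  ConvexOn ℝ (Ici 0) fun x => f (x ^ (1 / p))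

theorem ConvexOn.monotoneOn_Ici_of_isMinOn {𝕜 β : Type*} [Field 𝕜] [LinearOrder 𝕜]
    [IsStrictOrderedRing 𝕜] [AddCommMonoid β] [LinearOrder β] [IsOrderedAddMonoid β]
    [Module 𝕜 β] [PosSMulStrictMono 𝕜 β] {f : 𝕜 → β} {a : 𝕜}
    (hf : ConvexOn 𝕜 (Ici a) f) (hmin : IsMinOn f (Ici a) a) : MonotoneOn f (Ici a) := by
  intro x hx y hy hxy
  have hx_mem : x ∈ segment 𝕜 a y := by
    rw [segment_eq_Icc (le_trans hx hxy)]
    exact ⟨hx, hxy⟩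
  calc f x ≤ max (f a) (f y) := hf.le_on_segment self_mem_Ici hy hx_mem
    _ = f y := max_eq_right (hmin hy)

theorem ConvexOn.comp_rpow {f : ℝ → ℝ} {s : ℝ} (hf : ConvexOn ℝ (Ici 0) f)
    (hf_mono : MonotoneOn f (Ici 0)) (hs : 1 ≤ s) :
    ConvexOn ℝ (Ici 0) fun x => f (x ^ s) := by
  refine ⟨convex_Ici 0, fun x hx y hy a b ha hb hab => ?_⟩
  have hxs : x ^ s ∈ Ici 0 := Real.rpow_nonneg hx s
  have hys : y ^ s ∈ Ici 0 := Real.rpow_nonneg hy s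
  calc f ((a • x + b • y) ^ s)
      ≤ f (a • x ^ s + b • y ^ s) :=
        hf_mono (Real.rpow_nonneg ((convex_Ici 0) hx hy ha hb hab) s)
          ((convex_Ici 0) hxs hys ha hb hab)
          ((convexOn_rpow hs).2 hx hy ha hb hab)
    _ ≤ a • f (x ^ s) + b • f (y ^ s) :=
        hf.2 hxs hys ha hb hab

namespace IsRadicalConvex

theorem of_le {f : ℝ → ℝ} {p r : ℝ} (hf : IsRadicalConvex p f) (hr : 0 < r) (hrp : r ≤ p)
    (hmin : ∀ x ∈ Ici (0 : ℝ), f 0 ≤ f x) : IsRadicalConvex r f := by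
  have hp : 0 < p := hr.trans_le hrp
  have hmin' : IsMinOn (fun x => f (x ^ (1 / p))) (Ici 0) 0 := isMinOn_iff.2 fun x hx => by
    simpa only [Real.zero_rpow (one_div_pos.2 hp).ne'] using
      hmin _ (Real.rpow_nonneg (mem_Ici.1 hx) _)
  refine (hf.comp_rpow (hf.monotoneOn_Ici_of_isMinOn hmin') ((one_le_div hr).2 hrp)).congr ?_
  intro x hx
  simp only [← Real.rpow_mul (mem_Ici.1 hx)]
  congr 2
  field_simp

theorem add {f g : ℝ → ℝ} {p : ℝ} (hf : IsRadicalConvex p f) (hg : IsRadicalConvex p g) :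
    IsRadicalConvex p (f + g) :=
  ConvexOn.add hf hg

end IsRadicalConvex

theorem radical_convex_add_general (f g : ℝ → ℝ) (p q : ℝ) (hp : 1 ≤ p) (hq : 1 ≤ q)
    (hfmap : ∀ x ∈ Set.Ici (0:ℝ), 0 ≤ f x)
    (hgmap : ∀ x ∈ Set.Ici (0:ℝ), 0 ≤ g x)
    (hf0 : f 0 = 0) (hg0 : g 0 = 0)
    (hfconv : ConvexOn ℝ (Set.Ici 0) (fun x => f (x ^ (1/p))))
    (hgconv : ConvexOn ℝ (Set.Ici 0) (fun x => g (x ^ (1/q)))) :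
    ConvexOn ℝ (Set.Ici 0) (fun x => (f + g) (x ^ (1 / min p q))) := by
  have hr : 0 < min p q := zero_lt_one.trans_le (le_min hp hq)
  have hf : IsRadicalConvex (min p q) f :=
    IsRadicalConvex.of_le hfconv hr (min_le_left p q) fun x hx => by rw [hf0]; exact hfmap x hx
  have hg : IsRadicalConvex (min p q) g :=
    IsRadicalConvex.of_le hgconv hr (min_le_right p q) fun x hx => by rw [hg0]; exact hgmap x hx
  exact hf.add hg

theorem radical_convex_add (f g : ℝ → ℝ) (p q : ℝ) (hp : 1 ≤ p) (hq : 1 ≤ q)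
    (hfmap : ∀ x ∈ Set.Ici (0:ℝ), 0 ≤ f x)
    (hgmap : ∀ x ∈ Set.Ici (0:ℝ), 0 ≤ g x)
    (hfcont : ContinuousOn f (Set.Ici 0))
    (hgcont : ContinuousOn g (Set.Ici 0))
    (hf0 : f 0 = 0) (hg0 : g 0 = 0)
    (hfconv : ConvexOn ℝ (Set.Ici 0) (fun x => f (x ^ (1/p))))
    (hgconv : ConvexOn ℝ (Set.Ici 0) (fun x => g (x ^ (1/q)))) :
    ConvexOn ℝ (Set.Ici 0) (fun x => (f + g) (x ^ (1 / min p q))) :=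
  radical_convex_add_general f g p q hp hq hfmap hgmap hf0 hg0 hfconv hgconv
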